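/- Let N be a smooth function, c a real parameter, and define v₀ = u₀, v₁ = c·u₁, v₂ = c²u₂ + (1-c)u₁, v₃ = c³u₃ + 2c(1-c)u₂. Define B_k = (1/k!) d^k/dε^k [N(∑ v_i ε^i)]|_{ε=0} and A_k = (1/k!) d^k/dε^k [N(∑ u_i ε^i)]|_{ε=0}. Then B₀ = A₀, B₁ = c·A₁, B₂ = c²A₂ + (1-c)A₁, and B₃ = c³A₃ + 2c(1-c)A₂. -/

import Mathlib

lemma key_deriv_cubic (N : ℝ → ℝ) (hN : ContDiff ℝ (⊤ : ℕ∞) N) (a₀ a₁ a₂ a₃ : ℝ) :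
    iteratedDeriv 0 (fun ε => N (a₀ + a₁ * ε + a₂ * ε ^ 2 + a₃ * ε ^ 3)) 0 = N a₀ ∧
    iteratedDeriv 1 (fun ε => N (a₀ + a₁ * ε + a₂ * ε ^ 2 + a₃ * ε ^ 3)) 0
      = deriv N a₀ * a₁ ∧
    iteratedDeriv 2 (fun ε => N (a₀ + a₁ * ε + a₂ * ε ^ 2 + a₃ * ε ^ 3)) 0
      = deriv (deriv N) a₀ * a₁ ^ 2 + deriv N a₀ * (2 * a₂) ∧
    iteratedDeriv 3 (fun ε => N (a₀ + a₁ * ε + a₂ * ε ^ 2 + a₃ * ε ^ 3)) 0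
      = deriv (deriv (deriv N)) a₀ * a₁ ^ 3
        + 3 * deriv (deriv N) a₀ * (a₁ * (2 * a₂)) + deriv N a₀ * (6 * a₃) := by
  set f : ℝ → ℝ := fun ε => N (a₀ + a₁ * ε + a₂ * ε ^ 2 + a₃ * ε ^ 3) with hf
  set p : ℝ → ℝ := fun ε => a₀ + a₁ * ε + a₂ * ε ^ 2 + a₃ * ε ^ 3 with hpdef
  have hNi : ContDiff ℝ (↑(⊤ : ℕ∞)) N := hN.of_le (by simp)
  have hN1 : ContDiff ℝ (↑(⊤ : ℕ∞)) (deriv N) := (contDiff_infty_iff_deriv.mp hNi).2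
  have hN2 : ContDiff ℝ (↑(⊤ : ℕ∞)) (deriv (deriv N)) := (contDiff_infty_iff_deriv.mp hN1).2
  have hdN : Differentiable ℝ N := hNi.differentiable (by simp)
  have hdN1 : Differentiable ℝ (deriv N) := hN1.differentiable (by simp)
  have hdN2 : Differentiable ℝ (deriv (deriv N)) := hN2.differentiable (by simp)
  have hp : ∀ x : ℝ, HasDerivAt p (a₁ + 2 * a₂ * x + 3 * a₃ * x ^ 2) x := by
    intro x
    have h1 : HasDerivAt (fun ε : ℝ => a₁ * ε) a₁ x := by
      simpa using (hasDerivAt_id x).const_mul a₁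
    have h2 : HasDerivAt (fun ε : ℝ => a₂ * ε ^ 2) (a₂ * (2 * x)) x := by
      simpa using (hasDerivAt_pow 2 x).const_mul a₂
    have h3 : HasDerivAt (fun ε : ℝ => a₃ * ε ^ 3) (a₃ * (3 * x ^ 2)) x := by
      simpa using (hasDerivAt_pow 3 x).const_mul a₃
    have := (((hasDerivAt_const x a₀).add h1).add h2).add h3
    simp only [Pi.add_def] at this
    exact this.congr_deriv (by ring)
  have hq : ∀ x : ℝ, HasDerivAt (fun x : ℝ => a₁ + 2 * a₂ * x + 3 * a₃ * x ^ 2)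
      (2 * a₂ + 6 * a₃ * x) x := by
    intro x
    have h1 : HasDerivAt (fun ε : ℝ => 2 * a₂ * ε) (2 * a₂) x := by
      simpa using (hasDerivAt_id x).const_mul (2 * a₂)
    have h2 : HasDerivAt (fun ε : ℝ => 3 * a₃ * ε ^ 2) (3 * a₃ * (2 * x)) x := by
      simpa using (hasDerivAt_pow 2 x).const_mul (3 * a₃)
    have := ((hasDerivAt_const x a₁).add h1).add h2
    simp only [Pi.add_def] at this
    exact this.congr_deriv (by ring)
  have hr : ∀ x : ℝ, HasDerivAt (fun x : ℝ => 2 * a₂ + 6 * a₃ * x) (6 * a₃) x := by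
    intro x
    have h1 : HasDerivAt (fun ε : ℝ => 6 * a₃ * ε) (6 * a₃) x := by
      simpa using (hasDerivAt_id x).const_mul (6 * a₃)
    exact ((hasDerivAt_const x (2 * a₂)).add h1).congr_deriv (by ring)
  have hNp : ∀ x : ℝ, HasDerivAt (fun x => N (p x))
      (deriv N (p x) * (a₁ + 2 * a₂ * x + 3 * a₃ * x ^ 2)) x := fun x =>
    (hdN (p x)).hasDerivAt.comp x (hp x)
  have hN1p : ∀ x : ℝ, HasDerivAt (fun x => deriv N (p x))
      (deriv (deriv N) (p x) * (a₁ + 2 * a₂ * x + 3 * a₃ * x ^ 2)) x := fun x =>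
    (hdN1 (p x)).hasDerivAt.comp x (hp x)
  have hN2p : ∀ x : ℝ, HasDerivAt (fun x => deriv (deriv N) (p x))
      (deriv (deriv (deriv N)) (p x) * (a₁ + 2 * a₂ * x + 3 * a₃ * x ^ 2)) x := fun x =>
    (hdN2 (p x)).hasDerivAt.comp x (hp x)
  have h1 : deriv f = fun x => deriv N (p x) * (a₁ + 2 * a₂ * x + 3 * a₃ * x ^ 2) := by
    funext x
    exact (hNp x).deriv
  have h2 : deriv (deriv f) = fun x =>
      deriv (deriv N) (p x) * (a₁ + 2 * a₂ * x + 3 * a₃ * x ^ 2) ^ 2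
        + deriv N (p x) * (2 * a₂ + 6 * a₃ * x) := by
    rw [h1]
    funext x
    have hd := ((hN1p x).mul (hq x)).deriv
    simp only [Pi.mul_def, Pi.add_def] at hd
    rw [hd]
    ring
  have h3 : deriv (deriv (deriv f)) = fun x =>
      deriv (deriv (deriv N)) (p x) * (a₁ + 2 * a₂ * x + 3 * a₃ * x ^ 2) ^ 3
        + 3 * deriv (deriv N) (p x) * ((a₁ + 2 * a₂ * x + 3 * a₃ * x ^ 2) * (2 * a₂ + 6 * a₃ * x))
        + deriv N (p x) * (6 * a₃) := by
    rw [h2]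
    funext x
    have hq2 : HasDerivAt (fun x : ℝ => (a₁ + 2 * a₂ * x + 3 * a₃ * x ^ 2) ^ 2)
        (2 * (a₁ + 2 * a₂ * x + 3 * a₃ * x ^ 2) ^ 1 * (2 * a₂ + 6 * a₃ * x)) x :=
      (hq x).pow 2
    have hd := (((hN2p x).mul hq2).add ((hN1p x).mul (hr x))).deriv
    simp only [Pi.mul_def, Pi.add_def] at hd
    rw [hd]
    ring
  have hp0 : p 0 = a₀ := by simp [hpdef]
  refine ⟨by simp [hf, iteratedDeriv_zero], ?_, ?_, ?_⟩
  · rw [iteratedDeriv_one, h1]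
    simp [hp0]
  · rw [show (2 : ℕ) = 1 + 1 from rfl, iteratedDeriv_succ, iteratedDeriv_one, h2]
    simp [hp0]
  · rw [show (3 : ℕ) = 1 + 1 + 1 from rfl, iteratedDeriv_succ, iteratedDeriv_succ,
      iteratedDeriv_one, h3]
    simp [hp0]

theorem stmt_7 (N : ℝ → ℝ) (hN : ContDiff ℝ (⊤ : ℕ∞) N) (c u₀ u₁ u₂ u₃ : ℝ) :
    let v₀ := u₀
    let v₁ := c * u₁
    let v₂ := c ^ 2 * u₂ + (1 - c) * u₁
    let v₃ := c ^ 3 * u₃ + 2 * c * (1 - c) * u₂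
    let f : ℝ → ℝ := fun ε => N (u₀ + u₁ * ε + u₂ * ε ^ 2 + u₃ * ε ^ 3)
    let g : ℝ → ℝ := fun ε => N (v₀ + v₁ * ε + v₂ * ε ^ 2 + v₃ * ε ^ 3)
    let A : ℕ → ℝ := fun k => (1 / (Nat.factorial k : ℝ)) * iteratedDeriv k f 0
    let B : ℕ → ℝ := fun k => (1 / (Nat.factorial k : ℝ)) * iteratedDeriv k g 0
    B 0 = A 0 ∧
    B 1 = c * A 1 ∧
    B 2 = c ^ 2 * A 2 + (1 - c) * A 1 ∧
    B 3 = c ^ 3 * A 3 + 2 * c * (1 - c) * A 2 := by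
  intro v₀ v₁ v₂ v₃ f g A B
  obtain ⟨hu0, hu1, hu2, hu3⟩ := key_deriv_cubic N hN u₀ u₁ u₂ u₃
  obtain ⟨hv0, hv1, hv2, hv3⟩ := key_deriv_cubic N hN v₀ v₁ v₂ v₃
  refine ⟨?_, ?_, ?_, ?_⟩ <;>
    simp only [A, B, f, g, hu0, hu1, hu2, hu3, hv0, hv1, hv2, hv3, Nat.factorial] <;>
    · show _ = _
      simp only [v₀, v₁, v₂, v₃, hu0, hu1, hu2, hu3, hv0, hv1, hv2, hv3]
      all_goals (push_cast; ring)
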